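/- For all n ≥ 1, c_n^{(3)} = H_n^3/6 + H_n·H_n^{(2)}/2 + H_n^{(3)}/3, where H_n^{(k)} = Σ_{j=1}^n 1/j^k. -/
import Mathlib


/-- Roman harmonic number `c_n^{(k)}` as a rational number. -/
def romanHarmonic (n k : ℕ) : ℚ :=
  ∑ j ∈ Finset.Icc 1 n, (-1 : ℚ) ^ (j - 1) * (n.choose j) / (j : ℚ) ^ k

/-- Generalized harmonic number `H_n^{(k)}`. -/
def genHarmonic (n k : ℕ) : ℚ := ∑ j ∈ Finset.Icc 1 n, 1 / (j : ℚ) ^ k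

lemma gh_succ (n k : ℕ) : genHarmonic (n+1) k = genHarmonic n k + 1 / ((n:ℚ)+1) ^ k := by
  unfold genHarmonic
  rw [Finset.sum_Icc_succ_top (by omega : 1 ≤ n+1)]
  push_cast; ring

lemma rh_rec (n k : ℕ) : romanHarmonic (n+1) (k+1) =
    romanHarmonic n (k+1) + romanHarmonic (n+1) k / ((n:ℚ)+1) := by
  unfold romanHarmonic
  rw [Finset.sum_div]
  have hext : ∑ j ∈ Finset.Icc 1 n, (-1:ℚ) ^ (j - 1) * (n.choose j) / (j:ℚ) ^ (k+1)
      = ∑ j ∈ Finset.Icc 1 (n+1), (-1:ℚ) ^ (j - 1) * (n.choose j) / (j:ℚ) ^ (k+1) := by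
    rw [Finset.sum_Icc_succ_top (by omega : 1 ≤ n+1), Nat.choose_succ_self]
    simp
  rw [hext, ← Finset.sum_add_distrib]
  apply Finset.sum_congr rfl
  intro j hj
  simp only [Finset.mem_Icc] at hj
  obtain ⟨hj1, hj2⟩ := hj
  have hj' : j - 1 + 1 = j := by omega
  have h1 := Nat.choose_succ_succ n (j-1)
  simp only [Nat.succ_eq_add_one, hj'] at h1
  have h2 := Nat.add_one_mul_choose_eq n (j-1)
  simp only [Nat.succ_eq_add_one, hj'] at h2
  have h2q : ((n:ℚ)+1) * (n.choose (j-1)) = ((n+1).choose j : ℚ) * j := by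
    exact_mod_cast congrArg (Nat.cast : ℕ → ℚ) h2
  have aq : (((n+1).choose j : ℕ) : ℚ) = (n.choose (j-1) : ℚ) + (n.choose j : ℚ) := by
    exact_mod_cast congrArg (Nat.cast : ℕ → ℚ) h1
  have hkey : ((n:ℚ)+1) * ((n+1).choose j) = ((n:ℚ)+1) * (n.choose j) + (j:ℚ) * ((n+1).choose j) := by
    linear_combination ((n:ℚ)+1)*aq + h2q
  have hjq : (j:ℚ) ≠ 0 := by positivity
  have hn1 : ((n:ℚ)+1) ≠ 0 := by positivity
  have hX : (((n+1).choose j : ℚ)) / (j:ℚ)^(k+1) =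
      ((n.choose j : ℚ))/(j:ℚ)^(k+1) + (((n+1).choose j : ℚ))/(j:ℚ)^k/((n:ℚ)+1) := by
    rw [pow_succ, div_div,
      div_add_div _ _ (by positivity : (j:ℚ)^k*(j:ℚ) ≠ 0)
        (by positivity : (j:ℚ)^k*((n:ℚ)+1) ≠ 0),
      div_eq_div_iff (by positivity) (by positivity)]
    linear_combination ((j:ℚ) * ((j:ℚ)^k)^2) * hkey
  push_cast at hX ⊢
  linear_combination ((-1:ℚ)^(j-1)) * hX

lemma rh_zero (n : ℕ) (hn : 1 ≤ n) : romanHarmonic n 0 = 1 := by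
  unfold romanHarmonic
  have h := Int.alternating_sum_range_choose_of_ne (by omega : n ≠ 0)
  have hq : ∑ i ∈ Finset.range (n+1), (-1:ℚ)^i * (n.choose i) = 0 := by
    exact_mod_cast h
  have hins : Finset.range (n+1) = insert 0 (Finset.Icc 1 n) := by
    ext x; simp [Finset.mem_Icc]; omega
  rw [hins, Finset.sum_insert (by simp)] at hq
  have hs : ∑ j ∈ Finset.Icc 1 n, (-1:ℚ)^(j-1) * (n.choose j) / (j:ℚ)^0
       = ∑ j ∈ Finset.Icc 1 n, -((-1:ℚ)^j * (n.choose j)) := by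
    apply Finset.sum_congr rfl
    intro j hj
    simp only [Finset.mem_Icc] at hj
    have hsgn : (-1:ℚ)^j = -(-1:ℚ)^(j-1) := by
      conv_lhs => rw [show j = j-1+1 by omega]
      rw [pow_succ]; ring
    rw [hsgn, pow_zero, div_one]; ring
  rw [hs, Finset.sum_neg_distrib]
  simp at hq
  linarith [hq]

lemma rh_one (n : ℕ) (hn : 1 ≤ n) : romanHarmonic n 1 = genHarmonic n 1 := by
  induction n with
  | zero => omega
  | succ m ih =>
    rcases Nat.eq_zero_or_pos m with h|h
    · subst h; simp [romanHarmonic, genHarmonic]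
    · rw [rh_rec m 0, rh_zero (m+1) (by omega), ih h, gh_succ]
      ring

lemma rh_two (n : ℕ) (hn : 1 ≤ n) :
    romanHarmonic n 2 = ((genHarmonic n 1)^2 + genHarmonic n 2) / 2 := by
  induction n with
  | zero => omega
  | succ m ih =>
    rcases Nat.eq_zero_or_pos m with h|h
    · subst h; simp [romanHarmonic, genHarmonic]
    · have hm : ((m:ℚ)+1) ≠ 0 := by positivity
      rw [rh_rec m 1, rh_one (m+1) (by omega), ih h, gh_succ, gh_succ]
      field_simp
      ring

theorem roman_harmonic_three (n : ℕ) (hn : 1 ≤ n) :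
    romanHarmonic n 3 =
      (genHarmonic n 1) ^ 3 / 6 + genHarmonic n 1 * genHarmonic n 2 / 2 +
        genHarmonic n 3 / 3 := by
  induction n with
  | zero => omega
  | succ m ih =>
    rcases Nat.eq_zero_or_pos m with h|h
    · subst h; simp [romanHarmonic, genHarmonic]; norm_num
    · have hm : ((m:ℚ)+1) ≠ 0 := by positivity
      rw [rh_rec m 2, rh_two (m+1) (by omega), ih h, gh_succ, gh_succ, gh_succ]
      field_simp
      ring
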